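/- arXiv:2107.02432 — 2 statements merged into one kernel-verified Lean document; each statement's English description precedes it below -/
import Mathlib

section
/- Let A be a nonzero real d×n matrix, b ∈ ℝ^d, P a real m×n matrix, f : ℝ → ℝ convex and three times differentiable, ε > 0, R > 0, w ∈ ℝ^m, and suppose there exists Δ with AΔ = b. Let σ_min(P) = inf{ ‖Pu‖₂ : u ∈ ℝ^n, ‖u‖₂ = 1 } and let ‖A‖ denote the ℓ₂ operator norm of A. Then Ψ(r) = inf{ ∑_{i=1}^m r_i (PΔ)_i² : AΔ = b } ≥ (ε·Φ(w)/(m R²)) · σ_min(P)² · ‖b‖₂² / ‖A‖². -/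
/-!
Convexity makes `f'' ≥ 0`, so every resistance `r i` is at least `c = ε Φ(w) / (m R²)` and
`Ψ(r) ≥ c · inf {‖P Δ‖² : A Δ = b}`. For any `Δ` with `A Δ = b` we have
`σ_min(P) ‖Δ‖ ≤ ‖P Δ‖` and `‖b‖ = ‖A Δ‖ ≤ ‖A‖ ‖Δ‖`, hence `σ_min(P)² ‖b‖² / ‖A‖² ≤ ‖P Δ‖²`.
-/

open scoped BigOperators

open Metric WithLp

lemma ConvexOn.deriv_deriv_nonneg {f : ℝ → ℝ} (hf : ConvexOn ℝ Set.univ f)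
    (hd : Differentiable ℝ f) (x : ℝ) : 0 ≤ deriv (deriv f) x :=
  (monotoneOn_univ.mp (hf.monotoneOn_deriv fun y _ => hd y)).deriv_nonneg

section SphereNorms

variable {E F G : Type*} [NormedAddCommGroup E] [NormedSpace ℝ E]
  [NormedAddCommGroup F] [NormedSpace ℝ F] [NormedAddCommGroup G] [NormedSpace ℝ G]

lemma sInf_norm_image_sphere_mul_le (L : E →ₗ[ℝ] F) (x : E) :
    sInf ((‖L ·‖) '' sphere 0 1) * ‖x‖ ≤ ‖L x‖ := by
  rcases eq_or_ne x 0 with rfl | hx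
  · simp
  have hx' : 0 < ‖x‖ := norm_pos_iff.mpr hx
  have hmem : ‖x‖⁻¹ • x ∈ sphere (0 : E) 1 := by
    simp [norm_smul, inv_mul_cancel₀ hx'.ne']
  have hle : sInf ((‖L ·‖) '' sphere 0 1) ≤ ‖x‖⁻¹ * ‖L x‖ := by
    refine csInf_le ⟨0, ?_⟩ ⟨_, hmem, ?_⟩
    · rintro _ ⟨y, -, rfl⟩
      exact norm_nonneg _
    · simp [norm_smul]
  rwa [← le_div_iff₀ hx', div_eq_inv_mul]

lemma sq_sInf_mul_sq_div_sq_sSup_le (A : E →L[ℝ] F) (P : E →ₗ[ℝ] G) (x : E) :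
    sInf ((‖P ·‖) '' sphere 0 1) ^ 2 * ‖A x‖ ^ 2 / sSup ((‖A ·‖) '' sphere 0 1) ^ 2
      ≤ ‖P x‖ ^ 2 := by
  rw [A.sSup_sphere_eq_norm]
  set σ := sInf ((‖P ·‖) '' sphere 0 1)
  rcases (norm_nonneg A).eq_or_lt with hA | hA
  · simp [← hA]
  have hσ : 0 ≤ σ := Real.sInf_nonneg (by rintro _ ⟨y, -, rfl⟩; exact norm_nonneg _)
  have h : σ * ‖A x‖ ≤ ‖A‖ * ‖P x‖ :=
    calc σ * ‖A x‖ ≤ σ * (‖A‖ * ‖x‖) := by gcongr; exact A.le_opNorm x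
      _ = ‖A‖ * (σ * ‖x‖) := by ring
      _ ≤ ‖A‖ * ‖P x‖ := by gcongr; exact sInf_norm_image_sphere_mul_le P x
  rw [div_le_iff₀ (by positivity), ← mul_pow, ← mul_pow, mul_comm (‖P x‖)]
  gcongr

end SphereNorms

lemma EuclideanSpace.norm_toLp_eq_sqrt {ι : Type*} [Fintype ι] (u : ι → ℝ) :
    ‖toLp 2 u‖ = √(∑ i, u i ^ 2) := by
  simp [EuclideanSpace.norm_eq]

namespace Matrix

variable {ι κ : Type*} [Fintype ι] [Fintype κ] [DecidableEq κ]

lemma setOf_sqrt_sum_sq_mulVec_eq_image_sphere (M : Matrix ι κ ℝ) :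
    {v : ℝ | ∃ u : κ → ℝ, √(∑ j, u j ^ 2) = 1 ∧ v = √(∑ i, (M *ᵥ u) i ^ 2)} =
      (‖toEuclideanLin M ·‖) '' sphere 0 1 := by
  ext v
  simp only [← EuclideanSpace.norm_toLp_eq_sqrt, Set.mem_image, mem_sphere_zero_iff_norm]
  constructor
  · rintro ⟨u, hu, rfl⟩
    exact ⟨toLp 2 u, hu, rfl⟩
  · rintro ⟨x, hx, rfl⟩
    exact ⟨ofLp x, hx, rfl⟩

end Matrix

theorem psi_lower_bound_general
    (d n m : ℕ) (A : Matrix (Fin d) (Fin n) ℝ) (b : Fin d → ℝ)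
    (P : Matrix (Fin m) (Fin n) ℝ) (f : ℝ → ℝ)
    (hconv : ConvexOn ℝ Set.univ f)
    (hf1 : Differentiable ℝ f)
    (ε R : ℝ) (hε : 0 < ε)
    (w r : Fin m → ℝ)
    (hr : ∀ i, r i = 1 / R ^ 2 *
      (deriv (deriv f) (w i) + ε * (∑ j, deriv (deriv f) (w j)) / m))
    (hfeas : ∃ Δ : Fin n → ℝ, A.mulVec Δ = b) :
    sInf {v : ℝ | ∃ Δ : Fin n → ℝ, A.mulVec Δ = b ∧
        v = ∑ i, r i * (P.mulVec Δ) i ^ 2} ≥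
      (ε * (∑ j, deriv (deriv f) (w j)) / (m * R ^ 2)) *
        (sInf {v : ℝ | ∃ u : Fin n → ℝ,
            Real.sqrt (∑ j, u j ^ 2) = 1 ∧
            v = Real.sqrt (∑ i, (P.mulVec u) i ^ 2)}) ^ 2 *
        (∑ i, b i ^ 2) /
        (sSup {v : ℝ | ∃ u : Fin n → ℝ,
            Real.sqrt (∑ j, u j ^ 2) = 1 ∧
            v = Real.sqrt (∑ i, (A.mulVec u) i ^ 2)}) ^ 2 := by
  have hf'' := hconv.deriv_deriv_nonneg hf1
  set Φ := ∑ j, deriv (deriv f) (w j)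
  have hc : 0 ≤ ε * Φ / (m * R ^ 2) :=
    div_nonneg (mul_nonneg hε.le (Finset.sum_nonneg fun j _ => hf'' _)) (by positivity)
  have hcr : ∀ i, ε * Φ / (m * R ^ 2) ≤ r i := fun i => by
    rw [hr, show ε * Φ / (m * R ^ 2) = 1 / R ^ 2 * (ε * Φ / m) by ring]
    gcongr
    exact le_add_of_nonneg_left (hf'' _)
  rw [ge_iff_le, Matrix.setOf_sqrt_sum_sq_mulVec_eq_image_sphere,
    Matrix.setOf_sqrt_sum_sq_mulVec_eq_image_sphere]
  obtain ⟨Δ₀, hΔ₀⟩ := hfeas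
  refine le_csInf ⟨_, Δ₀, hΔ₀, rfl⟩ ?_
  rintro _ ⟨Δ, rfl, rfl⟩
  have hPΔ := sq_sInf_mul_sq_div_sq_sSup_le (Matrix.toEuclideanLin A).toContinuousLinearMap
    (Matrix.toEuclideanLin P) (toLp 2 Δ)
  simp only [EuclideanSpace.real_norm_sq_eq, LinearMap.coe_toContinuousLinearMap'] at hPΔ
  set σ := sInf ((‖Matrix.toEuclideanLin P ·‖) '' sphere 0 1)
  set S := sSup ((‖Matrix.toEuclideanLin A ·‖) '' sphere 0 1)
  calc ε * Φ / (m * R ^ 2) * σ ^ 2 * (∑ i, (A.mulVec Δ) i ^ 2) / S ^ 2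
      = ε * Φ / (m * R ^ 2) * (σ ^ 2 * (∑ i, (A.mulVec Δ) i ^ 2) / S ^ 2) := by ring
    _ ≤ ε * Φ / (m * R ^ 2) * ∑ i, (P.mulVec Δ) i ^ 2 := by gcongr; exact hPΔ
    _ ≤ ∑ i, r i * (P.mulVec Δ) i ^ 2 := by
      rw [Finset.mul_sum]
      exact Finset.sum_le_sum fun i _ => by gcongr; exact hcr i

/-- Lemma 2.4 (second inequality): lower bound on Ψ(r). -/
theorem psi_lower_bound
    (d n m : ℕ) (A : Matrix (Fin d) (Fin n) ℝ) (b : Fin d → ℝ)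
    (P : Matrix (Fin m) (Fin n) ℝ) (f : ℝ → ℝ)
    (hconv : ConvexOn ℝ Set.univ f)
    (hf1 : Differentiable ℝ f) (hf2 : Differentiable ℝ (deriv f))
    (hf3 : Differentiable ℝ (deriv (deriv f)))
    (hA : A ≠ 0)
    (ε R : ℝ) (hε : 0 < ε) (hR : 0 < R)
    (w r : Fin m → ℝ)
    (hr : ∀ i, r i = 1 / R ^ 2 *
      (deriv (deriv f) (w i) + ε * (∑ j, deriv (deriv f) (w j)) / m))
    (hfeas : ∃ Δ : Fin n → ℝ, A.mulVec Δ = b) :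
    sInf {v : ℝ | ∃ Δ : Fin n → ℝ, A.mulVec Δ = b ∧
        v = ∑ i, r i * (P.mulVec Δ) i ^ 2} ≥
      (ε * (∑ j, deriv (deriv f) (w j)) / (m * R ^ 2)) *
        (sInf {v : ℝ | ∃ u : Fin n → ℝ,
            Real.sqrt (∑ j, u j ^ 2) = 1 ∧
            v = Real.sqrt (∑ i, (P.mulVec u) i ^ 2)}) ^ 2 *
        (∑ i, b i ^ 2) /
        (sSup {v : ℝ | ∃ u : Fin n → ℝ,
            Real.sqrt (∑ j, u j ^ 2) = 1 ∧
            v = Real.sqrt (∑ i, (A.mulVec u) i ^ 2)}) ^ 2 :=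
  psi_lower_bound_general d n m A b P f hconv hf1 ε R hε w r hr hfeas
end

section
/- Let A be a real d×n matrix, b ∈ ℝ^d, P a real m×n matrix, M > 0, R ≥ 1/(2M), ν > 0, and let f : ℝ → ℝ be convex, three times differentiable with continuous third derivative, and M-quasi-self-concordant. Let F(y) = ∑_{i=1}^m f(y_i), let x* minimize F(Px) over {x : Ax = b} with ‖Px*‖_∞ ≤ R, and let x satisfy Ax = b, ‖Px‖_∞ ≤ R, and ν/2 < F(Px) − F(Px*) ≤ ν. Then the optimal value V = sup{ res_x(Δ) : AΔ = 0, ‖PΔ − z(x)‖_∞ ≤ 1/(2M) } satisfies ν/(8MR) < V ≤ e²·ν. -/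
/-!
Quasi-self-concordance makes `t ↦ e^{-Mt} f''(t)` antitone and `t ↦ e^{Mt} f''(t)` monotone, so
`f''` varies by at most a factor `e` over any interval of length `1/M`, and the second-order
Taylor expansion of `f` is then accurate up to that factor.

The upper bound is a descent argument: a feasible `Δ` satisfies `|(PΔ)ᵢ| ≤ 1/M`, so the upper
Taylor bound gives `F(P(x - e⁻²Δ)) ≤ F(Px) - e⁻² res_x(Δ)`; since `x - e⁻²Δ` is
feasible for the original problem, `e⁻² res_x(Δ) ≤ F(Px) - F(Px*) ≤ ν`.

The lower bound is witnessed by `Δ = t (x - x*)` with `t = 1/(4MR)`, which lies in the residual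
box around `z(x)`. Convexity along the segment from `x` to `x*` combined with the lower Taylor
bound gives `res_x(Δ) ≥ t (F(Px) - F(Px*)) > tν/2 = ν/(8MR)`.
-/

open scoped BigOperators

/-- The shift vector z(x) of the residual problem. -/
noncomputable def zShift (m n : ℕ) (P : Matrix (Fin m) (Fin n) ℝ)
    (M R : ℝ) (x : Fin n → ℝ) : Fin m → ℝ := fun i =>
  if (P.mulVec x) i - 1 / (2 * M) < -R then
    -(1 / (2 * M)) + R + (P.mulVec x) i
  else if R < (P.mulVec x) i + 1 / (2 * M) then
    -R + (P.mulVec x) i + 1 / (2 * M)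
  else 0

/-- The residual objective res_x(Δ) (with the corrected constant (2e)⁻¹). -/
noncomputable def resObj (m n : ℕ) (P : Matrix (Fin m) (Fin n) ℝ)
    (f : ℝ → ℝ) (x Δ : Fin n → ℝ) : ℝ :=
  (∑ i, deriv f ((P.mulVec x) i) * (P.mulVec Δ) i) -
    (2 * Real.exp 1)⁻¹ * ∑ i, deriv (deriv f) ((P.mulVec x) i) * (P.mulVec Δ) i ^ 2

open Set Real Matrix

theorem le_exp_mul_sub_mul_of_deriv_le {g : ℝ → ℝ} {K a b : ℝ} (hg : Differentiable ℝ g)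
    (h : ∀ t, deriv g t ≤ K * g t) (hab : a ≤ b) : g b ≤ exp (K * (b - a)) * g a := by
  have hanti : Antitone fun t => exp (-(K * t)) * g t := by
    refine antitone_of_deriv_nonpos (by fun_prop) fun t => ?_
    have hd : HasDerivAt (fun t => exp (-(K * t)) * g t)
        (exp (-(K * t)) * -K * g t + exp (-(K * t)) * deriv g t) t :=
      (((hasDerivAt_id t).const_mul K).neg.exp.congr_deriv (by simp)).mul (hg t).hasDerivAt
    rw [hd.deriv]
    nlinarith [h t, exp_pos (-(K * t))]
  have := mul_le_mul_of_nonneg_left (hanti hab) (exp_pos (K * b)).le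
  rwa [← mul_assoc, ← mul_assoc, ← exp_add, ← exp_add, add_neg_cancel, exp_zero, one_mul,
    ← sub_eq_add_neg, ← mul_sub] at this

theorem le_exp_mul_abs_sub_mul_of_abs_deriv_le {g : ℝ → ℝ} {K : ℝ} (hg : Differentiable ℝ g)
    (h : ∀ t, |deriv g t| ≤ K * g t) (a b : ℝ) : g b ≤ exp (K * |b - a|) * g a := by
  rcases le_total a b with hab | hba
  · rw [abs_of_nonneg (sub_nonneg.mpr hab)]
    exact le_exp_mul_sub_mul_of_deriv_le hg (fun t => (le_abs_self _).trans (h t)) hab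
  · have hrefl := le_exp_mul_sub_mul_of_deriv_le (g := fun t => g (-t))
      (hg.comp differentiable_neg)
      (fun t => by rw [deriv_comp_neg]; exact (neg_le_abs _).trans (h (-t))) (neg_le_neg hba)
    simp only [neg_neg] at hrefl
    rwa [abs_of_nonpos (sub_nonpos.mpr hba), neg_sub, ← neg_sub_neg]

theorem exists_eq_taylor_two {f : ℝ → ℝ} (hf : ContDiff ℝ 2 f) (s v : ℝ) :
    ∃ ξ, |ξ - s| ≤ |v| ∧ f (s + v) = f s + deriv f s * v + deriv (deriv f) ξ * v ^ 2 / 2 := by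
  rcases eq_or_ne v 0 with rfl | hv
  · exact ⟨s, by simp⟩
  have hne : s ≠ s + v := by simpa using hv
  obtain ⟨ξ, hξ, h⟩ := taylor_mean_remainder_lagrange_iteratedDeriv (n := 1) hne hf.contDiffOn
  have hderiv : derivWithin f (uIcc s (s + v)) s = deriv f s :=
    (hf.differentiable two_ne_zero s).derivWithin (uniqueDiffOn_uIcc hne s left_mem_uIcc)
  simp [taylorWithinEval_succ, iteratedDeriv_succ, hderiv] at h
  refine ⟨ξ, by simpa using abs_sub_left_of_mem_uIcc (uIoo_subset_uIcc_self hξ), by linarith⟩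

def IsQuasiSelfConcordant (M : ℝ) (f : ℝ → ℝ) : Prop :=
  ∀ s, |deriv (deriv (deriv f)) s| ≤ M * deriv (deriv f) s

namespace IsQuasiSelfConcordant

variable {f : ℝ → ℝ} {M : ℝ}

theorem deriv2_nonneg (hf : IsQuasiSelfConcordant M f) (hM : 0 < M) (s : ℝ) :
    0 ≤ deriv (deriv f) s :=
  nonneg_of_mul_nonneg_right ((abs_nonneg _).trans (hf s)) hM

theorem deriv2_le_exp_one_mul (hf : IsQuasiSelfConcordant M f) (hM : 0 < M)
    (hf3 : ContDiff ℝ 3 f) {a b : ℝ} (hab : |b - a| ≤ 1 / M) :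
    deriv (deriv f) b ≤ exp 1 * deriv (deriv f) a := by
  have hdiff : Differentiable ℝ (deriv (deriv f)) :=
    (hf3.iterate_deriv' 1 2).differentiable one_ne_zero
  refine (le_exp_mul_abs_sub_mul_of_abs_deriv_le hdiff hf a b).trans ?_
  gcongr
  · exact hf.deriv2_nonneg hM a
  · rwa [← le_div_iff₀' hM]

theorem le_apply_add (hf : IsQuasiSelfConcordant M f) (hM : 0 < M) (hf3 : ContDiff ℝ 3 f)
    {s v : ℝ} (hv : |v| ≤ 1 / M) :
    f s + deriv f s * v + (2 * exp 1)⁻¹ * (deriv (deriv f) s * v ^ 2) ≤ f (s + v) := by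
  obtain ⟨ξ, hξ, heq⟩ := exists_eq_taylor_two (hf3.of_le (by norm_num)) s v
  have hs : deriv (deriv f) s ≤ exp 1 * deriv (deriv f) ξ :=
    hf.deriv2_le_exp_one_mul hM hf3 (by rw [abs_sub_comm]; exact hξ.trans hv)
  have : (exp 1)⁻¹ * deriv (deriv f) s ≤ deriv (deriv f) ξ := by
    rwa [inv_mul_le_iff₀ (exp_pos 1)]
  rw [heq, mul_inv]
  nlinarith [mul_le_mul_of_nonneg_right this (sq_nonneg v)]

theorem apply_add_le (hf : IsQuasiSelfConcordant M f) (hM : 0 < M) (hf3 : ContDiff ℝ 3 f)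
    {s v : ℝ} (hv : |v| ≤ 1 / M) :
    f (s + v) ≤ f s + deriv f s * v + exp 1 / 2 * (deriv (deriv f) s * v ^ 2) := by
  obtain ⟨ξ, hξ, heq⟩ := exists_eq_taylor_two (hf3.of_le (by norm_num)) s v
  have hξ : deriv (deriv f) ξ ≤ exp 1 * deriv (deriv f) s :=
    hf.deriv2_le_exp_one_mul hM hf3 (hξ.trans hv)
  rw [heq]
  nlinarith [mul_le_mul_of_nonneg_right hξ (sq_nonneg v)]

theorem mul_sub_le_of_convexOn (hf : IsQuasiSelfConcordant M f) (hM : 0 < M)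
    (hf3 : ContDiff ℝ 3 f) (hconv : ConvexOn ℝ univ f) {t s r : ℝ} (ht0 : 0 ≤ t) (ht1 : t ≤ 1)
    (hu : |t * (s - r)| ≤ 1 / M) :
    t * (f s - f r) ≤
      deriv f s * (t * (s - r)) - (2 * exp 1)⁻¹ * (deriv (deriv f) s * (t * (s - r)) ^ 2) := by
  have hlow := hf.le_apply_add hM hf3 (s := s) (v := -(t * (s - r))) (by rwa [abs_neg])
  have hchord : f ((1 - t) * s + t * r) ≤ (1 - t) * f s + t * f r := by
    simpa only [smul_eq_mul] using
      hconv.2 (mem_univ s) (mem_univ r) (sub_nonneg.mpr ht1) ht0 (by ring)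
  rw [neg_sq, show s + -(t * (s - r)) = (1 - t) * s + t * r by ring] at hlow
  linarith

end IsQuasiSelfConcordant

section ResidualProblem

variable {m n : ℕ} (P : Matrix (Fin m) (Fin n) ℝ) {f : ℝ → ℝ} {M R : ℝ}

theorem resObj_eq_sum (x Δ : Fin n → ℝ) :
    resObj m n P f x Δ = ∑ i, (deriv f ((P *ᵥ x) i) * (P *ᵥ Δ) i -
      (2 * exp 1)⁻¹ * (deriv (deriv f) ((P *ᵥ x) i) * (P *ᵥ Δ) i ^ 2)) := by
  rw [resObj, Finset.sum_sub_distrib, Finset.mul_sum]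

theorem abs_zShift_le (hM : 0 ≤ M) {x : Fin n → ℝ} (hx : ∀ i, |(P *ᵥ x) i| ≤ R) (i : Fin m) :
    |zShift m n P M R x i| ≤ 1 / (2 * M) := by
  have hc : 0 ≤ 1 / (2 * M) := by positivity
  have := abs_le.mp (hx i)
  unfold zShift
  split_ifs <;> rw [abs_le] <;> constructor <;> linarith

theorem abs_mulVec_le_of_norm_sub_zShift_le (hM : 0 ≤ M) {x Δ : Fin n → ℝ}
    (hx : ∀ i, |(P *ᵥ x) i| ≤ R) (hΔ : ‖P *ᵥ Δ - zShift m n P M R x‖ ≤ 1 / (2 * M))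
    (i : Fin m) : |(P *ᵥ Δ) i| ≤ 1 / M := by
  have hi : |(P *ᵥ Δ) i - zShift m n P M R x i| ≤ 1 / (2 * M) :=
    (norm_le_pi_norm (P *ᵥ Δ - zShift m n P M R x) i).trans hΔ
  have := abs_sub_abs_le_abs_sub ((P *ᵥ Δ) i) (zShift m n P M R x i)
  have hz := abs_zShift_le P hM hx i
  linarith [show 1 / (2 * M) + 1 / (2 * M) = 1 / M by ring]

theorem abs_mul_sub_sub_zShift_le {x : Fin n → ℝ} {q : Fin m → ℝ} {t : ℝ}
    (hx : ∀ i, |(P *ᵥ x) i| ≤ R) (hq : ∀ i, |q i| ≤ R) (ht0 : 0 ≤ t) (ht1 : t ≤ 1)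
    (htR : t * (2 * R) ≤ 1 / (2 * M)) (i : Fin m) :
    |t * ((P *ᵥ x) i - q i) - zShift m n P M R x i| ≤ 1 / (2 * M) := by
  obtain ⟨hp₁, hp₂⟩ := abs_le.mp (hx i)
  obtain ⟨hq₁, hq₂⟩ := abs_le.mp (hq i)
  have hu₁ : t * ((P *ᵥ x) i - q i) ≤ t * ((P *ᵥ x) i + R) := by gcongr; linarith
  have hu₂ : t * ((P *ᵥ x) i - R) ≤ t * ((P *ᵥ x) i - q i) := by gcongr
  have hu : |t * ((P *ᵥ x) i - q i)| ≤ t * (2 * R) := by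
    rw [abs_mul, abs_of_nonneg ht0]; gcongr; rw [abs_le]; constructor <;> linarith
  have hlo : t * ((P *ᵥ x) i + R) ≤ (P *ᵥ x) i + R := mul_le_of_le_one_left (by linarith) ht1
  have hhi : (P *ᵥ x) i - R ≤ t * ((P *ᵥ x) i - R) := le_mul_of_le_one_left (by linarith) ht1
  have := abs_le.mp hu
  unfold zShift
  split_ifs <;> rw [abs_le] <;> constructor <;> linarith

theorem norm_mulVec_smul_sub_sub_zShift_le (hM : 0 ≤ M) {x y : Fin n → ℝ} {t : ℝ}
    (hx : ∀ i, |(P *ᵥ x) i| ≤ R) (hy : ∀ i, |(P *ᵥ y) i| ≤ R) (ht0 : 0 ≤ t) (ht1 : t ≤ 1)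
    (htR : t * (2 * R) ≤ 1 / (2 * M)) :
    ‖P *ᵥ (t • (x - y)) - zShift m n P M R x‖ ≤ 1 / (2 * M) := by
  refine (pi_norm_le_iff_of_nonneg (by positivity)).mpr fun i => ?_
  simpa [mulVec_smul, mulVec_sub] using abs_mul_sub_sub_zShift_le P hx hy ht0 ht1 htR i

variable (hqsc : IsQuasiSelfConcordant M f) (hM : 0 < M) (hf : ContDiff ℝ 3 f)
include hqsc hM hf

theorem sum_apply_mulVec_sub_inv_exp_two_smul_le {x Δ : Fin n → ℝ}
    (hΔ : ∀ i, |(P *ᵥ Δ) i| ≤ 1 / M) :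
    ∑ i, f ((P *ᵥ (x - (exp 2)⁻¹ • Δ)) i) ≤
      ∑ i, f ((P *ᵥ x) i) - (exp 2)⁻¹ * resObj m n P f x Δ := by
  rw [resObj_eq_sum, Finset.mul_sum, ← Finset.sum_sub_distrib]
  gcongr with i
  have hstep : |-((exp 2)⁻¹ * (P *ᵥ Δ) i)| ≤ 1 / M := by
    rw [abs_neg, abs_mul, abs_of_pos (inv_pos.mpr (exp_pos 2))]
    have hdamp : (exp 2)⁻¹ ≤ 1 := inv_le_one_of_one_le₀ (one_le_exp zero_le_two)
    exact (mul_le_of_le_one_left (abs_nonneg _) hdamp).trans (hΔ i)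
  have := hqsc.apply_add_le hM hf (s := (P *ᵥ x) i) hstep
  simp only [mulVec_sub, mulVec_smul, Pi.sub_apply, Pi.smul_apply, smul_eq_mul]
  rw [show exp 2 = exp 1 * exp 1 by rw [← exp_add]; norm_num] at this ⊢
  rw [← sub_eq_add_neg] at this
  refine this.trans_eq ?_
  field_simp
  ring

theorem resObj_le_exp_two_mul_sub {d : ℕ} {A : Matrix (Fin d) (Fin n) ℝ} {b : Fin d → ℝ}
    {F₀ : ℝ} (hopt : ∀ x', A *ᵥ x' = b → F₀ ≤ ∑ i, f ((P *ᵥ x') i)) {x Δ : Fin n → ℝ}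
    (hxA : A *ᵥ x = b) (hΔA : A *ᵥ Δ = 0) (hΔ : ∀ i, |(P *ᵥ Δ) i| ≤ 1 / M) :
    resObj m n P f x Δ ≤ exp 2 * (∑ i, f ((P *ᵥ x) i) - F₀) := by
  have hfeas : A *ᵥ (x - (exp 2)⁻¹ • Δ) = b := by
    rw [mulVec_sub, mulVec_smul, hΔA, smul_zero, sub_zero, hxA]
  have hdescent := sum_apply_mulVec_sub_inv_exp_two_smul_le P hqsc hM hf (x := x) hΔ
  rw [← inv_mul_le_iff₀ (exp_pos 2)]
  linarith [hopt _ hfeas]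

theorem mul_sub_le_resObj (hconv : ConvexOn ℝ univ f) {x y : Fin n → ℝ} {t : ℝ} (ht0 : 0 ≤ t)
    (ht1 : t ≤ 1) (hstep : ∀ i, |(P *ᵥ (t • (x - y))) i| ≤ 1 / M) :
    t * (∑ i, f ((P *ᵥ x) i) - ∑ i, f ((P *ᵥ y) i)) ≤ resObj m n P f x (t • (x - y)) := by
  have hP : P *ᵥ (t • (x - y)) = t • (P *ᵥ x - P *ᵥ y) := by rw [mulVec_smul, mulVec_sub]
  simp only [hP, Pi.smul_apply, Pi.sub_apply, smul_eq_mul] at hstep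
  rw [resObj_eq_sum, ← Finset.sum_sub_distrib, Finset.mul_sum, hP]
  gcongr with i
  exact hqsc.mul_sub_le_of_convexOn hM hf hconv ht0 ht1 (hstep i)

end ResidualProblem

theorem residual_value_range_general
    (d n m : ℕ) (A : Matrix (Fin d) (Fin n) ℝ) (b : Fin d → ℝ)
    (P : Matrix (Fin m) (Fin n) ℝ) (M R ν : ℝ)
    (hM : 0 < M) (hR : 1 / (2 * M) ≤ R)
    (f : ℝ → ℝ) (hconv : ConvexOn ℝ Set.univ f) (hf : ContDiff ℝ 3 f)
    (hqsc : ∀ s : ℝ, |deriv (deriv (deriv f)) s| ≤ M * deriv (deriv f) s)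
    (xstar : Fin n → ℝ) (hxsA : A.mulVec xstar = b)
    (hxsR : ‖P.mulVec xstar‖ ≤ R)
    (hxsopt : ∀ x' : Fin n → ℝ, A.mulVec x' = b →
      (∑ i, f ((P.mulVec xstar) i)) ≤ ∑ i, f ((P.mulVec x') i))
    (x : Fin n → ℝ) (hxA : A.mulVec x = b) (hxR : ‖P.mulVec x‖ ≤ R)
    (hgap1 : ν / 2 < (∑ i, f ((P.mulVec x) i)) - ∑ i, f ((P.mulVec xstar) i))
    (hgap2 : (∑ i, f ((P.mulVec x) i)) - (∑ i, f ((P.mulVec xstar) i)) ≤ ν) :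
    ν / (8 * M * R) <
        sSup {v : ℝ | ∃ Δ : Fin n → ℝ, A.mulVec Δ = 0 ∧
          ‖P.mulVec Δ - zShift m n P M R x‖ ≤ 1 / (2 * M) ∧
          v = resObj m n P f x Δ} ∧
      sSup {v : ℝ | ∃ Δ : Fin n → ℝ, A.mulVec Δ = 0 ∧
          ‖P.mulVec Δ - zShift m n P M R x‖ ≤ 1 / (2 * M) ∧
          v = resObj m n P f x Δ} ≤ Real.exp 2 * ν := by
  set S := {v : ℝ | ∃ Δ : Fin n → ℝ, A.mulVec Δ = 0 ∧
    ‖P.mulVec Δ - zShift m n P M R x‖ ≤ 1 / (2 * M) ∧ v = resObj m n P f x Δ}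
  have hx : ∀ i, |(P *ᵥ x) i| ≤ R := fun i => (norm_le_pi_norm _ i).trans hxR
  have hxs : ∀ i, |(P *ᵥ xstar) i| ≤ R := fun i => (norm_le_pi_norm _ i).trans hxsR
  have hUB : ∀ v ∈ S, v ≤ exp 2 * ν := by
    rintro v ⟨Δ, hΔA, hΔ, rfl⟩
    refine (resObj_le_exp_two_mul_sub P hqsc hM hf hxsopt hxA hΔA
      (abs_mulVec_le_of_norm_sub_zShift_le P hM.le hx hΔ)).trans ?_
    gcongr
  have hR0 : 0 < R := lt_of_lt_of_le (by positivity) hR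
  have hMR : 1 ≤ R * (2 * M) := (div_le_iff₀ (by positivity)).mp hR
  set t := 1 / (4 * M * R) with ht
  have ht0 : 0 < t := by positivity
  have ht1 : t ≤ 1 := by rw [ht, div_le_one (by positivity)]; linarith
  have htR : t * (2 * R) ≤ 1 / (2 * M) := le_of_eq (by rw [ht]; field_simp; ring)
  have hfeas := norm_mulVec_smul_sub_sub_zShift_le P hM.le hx hxs ht0.le ht1 htR
  have hmem : resObj m n P f x (t • (x - xstar)) ∈ S :=
    ⟨_, by rw [mulVec_smul, mulVec_sub, hxA, hxsA, sub_self, smul_zero], hfeas, rfl⟩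
  refine ⟨?_, csSup_le ⟨_, hmem⟩ hUB⟩
  calc ν / (8 * M * R) = t * (ν / 2) := by ring
    _ < t * (∑ i, f ((P *ᵥ x) i) - ∑ i, f ((P *ᵥ xstar) i)) := by gcongr
    _ ≤ resObj m n P f x (t • (x - xstar)) :=
      mul_sub_le_resObj P hqsc hM hf hconv ht0.le ht1
        (abs_mulVec_le_of_norm_sub_zShift_le P hM.le hx hfeas)
    _ ≤ sSup S := le_csSup ⟨_, hUB⟩ hmem

/-- Lemma 4.3: if ν/2 < F(Px) − F(Px*) ≤ ν, then the optimal residual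
value V satisfies ν/(8MR) < V ≤ e²·ν. -/
theorem residual_value_range
    (d n m : ℕ) (A : Matrix (Fin d) (Fin n) ℝ) (b : Fin d → ℝ)
    (P : Matrix (Fin m) (Fin n) ℝ) (M R ν : ℝ)
    (hM : 0 < M) (hR : 1 / (2 * M) ≤ R) (hν : 0 < ν)
    (f : ℝ → ℝ) (hconv : ConvexOn ℝ Set.univ f) (hf : ContDiff ℝ 3 f)
    (hqsc : ∀ s : ℝ, |deriv (deriv (deriv f)) s| ≤ M * deriv (deriv f) s)
    (xstar : Fin n → ℝ) (hxsA : A.mulVec xstar = b)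
    (hxsR : ‖P.mulVec xstar‖ ≤ R)
    (hxsopt : ∀ x' : Fin n → ℝ, A.mulVec x' = b →
      (∑ i, f ((P.mulVec xstar) i)) ≤ ∑ i, f ((P.mulVec x') i))
    (x : Fin n → ℝ) (hxA : A.mulVec x = b) (hxR : ‖P.mulVec x‖ ≤ R)
    (hgap1 : ν / 2 < (∑ i, f ((P.mulVec x) i)) - ∑ i, f ((P.mulVec xstar) i))
    (hgap2 : (∑ i, f ((P.mulVec x) i)) - (∑ i, f ((P.mulVec xstar) i)) ≤ ν) :
    ν / (8 * M * R) <
        sSup {v : ℝ | ∃ Δ : Fin n → ℝ, A.mulVec Δ = 0 ∧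
          ‖P.mulVec Δ - zShift m n P M R x‖ ≤ 1 / (2 * M) ∧
          v = resObj m n P f x Δ} ∧
      sSup {v : ℝ | ∃ Δ : Fin n → ℝ, A.mulVec Δ = 0 ∧
          ‖P.mulVec Δ - zShift m n P M R x‖ ≤ 1 / (2 * M) ∧
          v = resObj m n P f x Δ} ≤ Real.exp 2 * ν :=
  residual_value_range_general d n m A b P M R ν hM hR f hconv hf hqsc xstar hxsA hxsR hxsopt x hxA
    hxR hgap1 hgap2
end
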